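/- Let (G,v₀,W) be a Banach–Mazur game on a finite graph and let P be a reasonable probability measure on Paths(G,v₀). If Player 0 has a move-counting winning strategy for (G,v₀,W), then for every α with 0 < α < 1, Player 0 has a winning α-strategy for (G,v₀,W). -/

import Mathlib

open MeasureTheory
open scoped ENNReal NNReal

namespace BMGame

variable {V : Type*}

/-- The prefix of length `n` of the infinite sequence `ρ`. -/
def pref (ρ : ℕ → V) (n : ℕ) : List V := (List.range n).map ρ

/-- `ρ` is an infinite path of the graph `E` starting at `v₀`. -/
def IsPlay (E : V → V → Prop) (v₀ : V) (ρ : ℕ → V) : Prop :=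
  ρ 0 = v₀ ∧ ∀ n, E (ρ n) (ρ (n + 1))

/-- `π` is a nonempty finite path of the graph `E` starting at `v₀` (a position of the game). -/
def IsPos (E : V → V → Prop) (v₀ : V) (π : List V) : Prop :=
  π.head? = some v₀ ∧ π.Chain' E

/-- A strategy for player 0 assigns to each position the (nonempty) block of vertices
appended by player 0's move; `(π ++ f π).Chain' E` says that this block is a path
starting at the last vertex of `π`. -/
def IsStrategy (E : V → V → Prop) (v₀ : V) (f : List V → List V) : Prop :=
  ∀ π, IsPos E v₀ π → f π ≠ [] ∧ (π ++ f π).Chain' E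

/-- The play `ρ` is consistent with the strategy `f`: there are cut points
`c 0, c 1, …` (the lengths of the prefixes built after each move of player 1) such that
after each such prefix player 0 plays according to `f`, and player 1 then appends a
nonempty block. -/
def ConsGen (f : List V → List V) (ρ : ℕ → V) : Prop :=
  ∃ c : ℕ → ℕ, 1 ≤ c 0 ∧ ∀ i,
    pref ρ (c i + (f (pref ρ (c i))).length) = pref ρ (c i) ++ f (pref ρ (c i)) ∧
    c i + (f (pref ρ (c i))).length < c (i + 1)

/-- `f` is a winning strategy for player 0 in the Banach–Mazur game `(E, v₀, W)`. -/
def WinningStrategy (E : V → V → Prop) (v₀ : V) (W : Set (ℕ → V))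
    (f : List V → List V) : Prop :=
  IsStrategy E v₀ f ∧ ∀ ρ, IsPlay E v₀ ρ → ConsGen f ρ → ρ ∈ W

/-- The strategy `f` is `b`-bounded: each of its moves has length at most `b`. -/
def BoundedBy (E : V → V → Prop) (v₀ : V) (b : ℕ) (f : List V → List V) : Prop :=
  ∀ π, IsPos E v₀ π → (f π).length ≤ b

/-- A positional strategy assigns to each vertex the nonempty block appended. -/
def IsPositional (E : V → V → Prop) (f : V → List V) : Prop :=
  ∀ v, f v ≠ [] ∧ (v :: f v).Chain' E

/-- Consistency with a positional strategy: after each prefix chosen by player 1,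
player 0 plays `f` of the current (last) vertex. -/
def ConsPositional (f : V → List V) (ρ : ℕ → V) : Prop :=
  ∃ c : ℕ → ℕ, 1 ≤ c 0 ∧ ∀ i,
    pref ρ (c i + (f (ρ (c i - 1))).length) = pref ρ (c i) ++ f (ρ (c i - 1)) ∧
    c i + (f (ρ (c i - 1))).length < c (i + 1)

def PositionalWinning (E : V → V → Prop) (v₀ : V) (W : Set (ℕ → V)) (f : V → List V) : Prop :=
  IsPositional E f ∧ ∀ ρ, IsPlay E v₀ ρ → ConsPositional f ρ → ρ ∈ W

/-- Structural requirement shared by move-counting and length-counting strategies: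
for `n ≥ 1`, `h v n` is a nonempty block forming a path from `v`. -/
def IsCountingStrategy (E : V → V → Prop) (h : V → ℕ → List V) : Prop :=
  ∀ v n, 1 ≤ n → h v n ≠ [] ∧ (v :: h v n).Chain' E

/-- Consistency with a move-counting strategy: at its `i`-th move (`i ≥ 1`) player 0 plays
`h (current vertex) i`. -/
def ConsMoveCounting (h : V → ℕ → List V) (ρ : ℕ → V) : Prop :=
  ∃ c : ℕ → ℕ, 1 ≤ c 0 ∧ ∀ i,
    pref ρ (c i + (h (ρ (c i - 1)) (i + 1)).length) = pref ρ (c i) ++ h (ρ (c i - 1)) (i + 1) ∧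
    c i + (h (ρ (c i - 1)) (i + 1)).length < c (i + 1)

def MoveCountingWinning (E : V → V → Prop) (v₀ : V) (W : Set (ℕ → V))
    (h : V → ℕ → List V) : Prop :=
  IsCountingStrategy E h ∧ ∀ ρ, IsPlay E v₀ ρ → ConsMoveCounting h ρ → ρ ∈ W

/-- Consistency with a length-counting strategy: after a prefix of length `c i`
player 0 plays `h (current vertex) (c i)`. -/
def ConsLengthCounting (h : V → ℕ → List V) (ρ : ℕ → V) : Prop :=
  ∃ c : ℕ → ℕ, 1 ≤ c 0 ∧ ∀ i,
    pref ρ (c i + (h (ρ (c i - 1)) (c i)).length) = pref ρ (c i) ++ h (ρ (c i - 1)) (c i) ∧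
    c i + (h (ρ (c i - 1)) (c i)).length < c (i + 1)

def LengthCountingWinning (E : V → V → Prop) (v₀ : V) (W : Set (ℕ → V))
    (h : V → ℕ → List V) : Prop :=
  IsCountingStrategy E h ∧ ∀ ρ, IsPlay E v₀ ρ → ConsLengthCounting h ρ → ρ ∈ W

/-- The segment `ρ a, ρ (a+1), …, ρ (b-1)` of an infinite sequence. -/
def seg (ρ : ℕ → V) (a b : ℕ) : List V := (List.range (b - a)).map fun j => ρ (a + j)

/-- A last-move strategy is defined on all nonempty finite paths of the graph. -/
def IsLastMove (E : V → V → Prop) (g : List V → List V) : Prop :=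
  ∀ π, π ≠ [] → π.Chain' E → g π ≠ [] ∧ (π ++ g π).Chain' E

/-- Consistency with the last-move strategy `g`: the play decomposes as
`π₁ g(π₁) π₂ g(π₂) ⋯` where the `πᵢ` are the (nonempty) moves of player 1. -/
def ConsLastMove (g : List V → List V) (ρ : ℕ → V) : Prop :=
  ∃ s e : ℕ → ℕ, s 0 = 0 ∧ (∀ i, s i < e i) ∧ ∀ i,
    seg ρ (e i) (e i + (g (seg ρ (s i) (e i))).length) = g (seg ρ (s i) (e i)) ∧
    s (i + 1) = e i + (g (seg ρ (s i) (e i))).length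

def LastMoveWinning (E : V → V → Prop) (v₀ : V) (W : Set (ℕ → V)) (g : List V → List V) : Prop :=
  IsLastMove E g ∧ ∀ ρ, IsPlay E v₀ ρ → ConsLastMove g ρ → ρ ∈ W

/-- The cylinder generated by the finite word `π`. -/
def Cyl (π : List V) : Set (ℕ → V) := {ρ | pref ρ π.length = π}

/-- One-step transition probabilities obtained from the weights `w`. -/
noncomputable def transP [Fintype V] (E : V → V → Prop) (w : V → V → ℝ≥0) (u v : V) : ℝ≥0∞ := by
  classical
  exact if E u v then
    (w u v : ℝ≥0∞) / ∑ x ∈ Finset.univ.filter (fun x => E u x), (w u x : ℝ≥0∞)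
  else 0

/-- The probability of the cylinder generated by a finite word: the product of the
one-step transition probabilities along it. -/
noncomputable def pathP [Fintype V] (E : V → V → Prop) (w : V → V → ℝ≥0) (π : List V) : ℝ≥0∞ :=
  ((π.zip π.tail).map fun q => transP E w q.1 q.2).prod

/-- `P` is the reasonable probability measure associated with the weights `w`. -/
def IsReasonable [Fintype V] [MeasurableSpace (ℕ → V)] (E : V → V → Prop) (v₀ : V)
    (w : V → V → ℝ≥0) (P : Measure (ℕ → V)) : Prop :=
  IsProbabilityMeasure P ∧ ∀ π : List V, π.head? = some v₀ → P (Cyl π) = pathP E w π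

/-- `Ps` is a legal move of player 0 in the generalised game `G_α` at position `π`: a
finite nonempty set of nonempty finite paths from the last vertex of `π` whose union of
cylinders has conditional probability at least `α` given `Cyl π`. -/
def LegalProposal [MeasurableSpace (ℕ → V)] (E : V → V → Prop) (P : Measure (ℕ → V)) (α : ℝ)
    (π : List V) (Ps : Finset (List V)) : Prop :=
  Ps.Nonempty ∧ (∀ τ ∈ Ps, τ ≠ [] ∧ (π ++ τ).Chain' E) ∧
    ENNReal.ofReal α ≤ P (⋃ τ ∈ Ps, Cyl (π ++ τ)) / P (Cyl π)

/-- An α-strategy for player 0. -/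
def IsAlphaStrategy [MeasurableSpace (ℕ → V)] (E : V → V → Prop) (v₀ : V) (P : Measure (ℕ → V))
    (α : ℝ) (f : List V → Finset (List V)) : Prop :=
  ∀ π, IsPos E v₀ π → LegalProposal E P α π (f π)

/-- Consistency with an α-strategy: at each stage, player 1 picks some element of the
set proposed by player 0 and appends a nonempty block after it. -/
def ConsAlpha (f : List V → Finset (List V)) (ρ : ℕ → V) : Prop :=
  ∃ c : ℕ → ℕ, 1 ≤ c 0 ∧ ∀ i, ∃ τ ∈ f (pref ρ (c i)),
    pref ρ (c i + τ.length) = pref ρ (c i) ++ τ ∧ c i + τ.length < c (i + 1)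

def AlphaWinning [MeasurableSpace (ℕ → V)] (E : V → V → Prop) (v₀ : V) (P : Measure (ℕ → V))
    (α : ℝ) (W : Set (ℕ → V)) (f : List V → Finset (List V)) : Prop :=
  IsAlphaStrategy E v₀ P α f ∧ ∀ ρ, IsPlay E v₀ ρ → ConsAlpha f ρ → ρ ∈ W

/-- A strategy for player 1 in the generalised game `G_α` consists of an initial path and,
for each position together with a legal proposal of player 0, the selected element of the
proposal and the next (nonempty) block played by player 1. -/
def IsP1Strategy [MeasurableSpace (ℕ → V)] (E : V → V → Prop) (v₀ : V) (P : Measure (ℕ → V))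
    (α : ℝ) (init : List V) (g : List V → Finset (List V) → List V × List V) : Prop :=
  IsPos E v₀ init ∧
    ∀ π Ps, IsPos E v₀ π → LegalProposal E P α π Ps →
      (g π Ps).1 ∈ Ps ∧ (g π Ps).2 ≠ [] ∧ (π ++ ((g π Ps).1 ++ (g π Ps).2)).Chain' E

/-- Consistency of a play with player 1's strategy `(init, g)`:
there is a sequence of legal proposals of player 0 generating the play. -/
def ConsP1 [MeasurableSpace (ℕ → V)] (E : V → V → Prop) (P : Measure (ℕ → V)) (α : ℝ)
    (init : List V) (g : List V → Finset (List V) → List V × List V) (ρ : ℕ → V) : Prop :=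
  ∃ (Ps : ℕ → Finset (List V)) (p : ℕ → List V), p 0 = init ∧
    (∀ n, pref ρ (p n).length = p n) ∧
    ∀ n, LegalProposal E P α (p n) (Ps n) ∧
      p (n + 1) = p n ++ ((g (p n) (Ps n)).1 ++ (g (p n) (Ps n)).2)

def P1Winning [MeasurableSpace (ℕ → V)] (E : V → V → Prop) (v₀ : V) (P : Measure (ℕ → V))
    (α : ℝ) (W : Set (ℕ → V)) (init : List V)
    (g : List V → Finset (List V) → List V × List V) : Prop :=
  IsP1Strategy E v₀ P α init g ∧ ∀ ρ, IsPlay E v₀ ρ → ConsP1 E P α init g ρ → ρ ∉ W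

/-- A union of cylinders, i.e. an open subset of the space of sequences. -/
def IsCylOpen (U : Set (ℕ → V)) : Prop :=
  ∃ S : Set (List V), U = ⋃ π ∈ S, Cyl π

/-- `W` is a countable intersection of open subsets of the space `Paths (G, v₀)`. -/
def IsCountableInterOfOpens (E : V → V → Prop) (v₀ : V) (W : Set (ℕ → V)) : Prop :=
  ∃ U : ℕ → Set (ℕ → V), (∀ n, IsCylOpen (U n)) ∧
    W = {ρ | IsPlay E v₀ ρ} ∩ ⋂ n, U n

/-- For every `n`, the concatenation of the blocks `u 0, …, u (n-1)` is a prefix of `ρ`. -/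
def AgreesWithBlocks (ρ : ℕ → V) (u : ℕ → List V) : Prop :=
  ∀ n, pref ρ (((List.range n).map u).flatten).length = ((List.range n).map u).flatten

end BMGame

open BMGame

/-!
Fix a position `π` of length `ℓ`, and for each vertex `v` let `t v` be the path traced by the
first `ℓ` moves of the move-counting strategy `h` from `v` when player 1 never interjects. Since
the graph is finite, every `t v` has probability at least some `δ > 0` and length at most some `B`.
Player 0 proposes all continuations of length `k * B` which, cut into `k` blocks of length `B`,
have a block starting with `t x` for the vertex `x` reached just before it. The blocks are
independent, so the proposal misses with probability at most `(1 - δ) ^ k < 1 - α`.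

At round `i` the position has length at least `i + 1`, so whichever proposed path player 1
accepts contains the `(i + 1)`-st move of `h` played from the vertex where it starts. Every play
consistent with this α-strategy is therefore consistent with `h`, hence winning.
-/

namespace BMGame

variable {V : Type*}

section Paths

lemma getLastD_append (l l' : List V) (a : V) :
    (l ++ l').getLastD a = l'.getLastD (l.getLastD a) := by
  simp only [List.getLastD_eq_getLast?, List.getLast?_append]
  cases l'.getLast? <;> simp

lemma isChain_cons_append {E : V → V → Prop} {a : V} {t l : List V}
    (ht : (a :: t).IsChain E) (hl : (t.getLastD a :: l).IsChain E) : (a :: (t ++ l)).IsChain E := by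
  induction t generalizing a with
  | nil => simpa using hl
  | cons b t ih =>
    simp only [List.cons_append, List.isChain_cons_cons] at ht ⊢
    rw [List.getLastD_cons] at hl
    exact ⟨ht.1, ih ht.2 hl⟩

@[simp] lemma length_pref (ρ : ℕ → V) (n : ℕ) : (pref ρ n).length = n := by
  simp [pref]

lemma getLastD_pref (ρ : ℕ → V) {n : ℕ} (hn : n ≠ 0) (a : V) :
    (pref ρ n).getLastD a = ρ (n - 1) := by
  obtain ⟨n, rfl⟩ := Nat.exists_eq_succ_of_ne_zero hn
  simp only [pref, List.range_succ, List.map_append, List.map_singleton, List.getLastD_concat,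
    Nat.succ_sub_one]

def BlockAt (ρ : ℕ → V) (m : ℕ) (l : List V) : Prop :=
  pref ρ (m + l.length) = pref ρ m ++ l

lemma blockAt_iff {ρ : ℕ → V} {m : ℕ} {l : List V} :
    BlockAt ρ m l ↔ (List.range l.length).map (fun j => ρ (m + j)) = l := by
  simp only [BlockAt, pref, List.range_add, List.map_append, List.map_map,
    List.append_cancel_left_eq]
  rfl

lemma blockAt_append {ρ : ℕ → V} {m : ℕ} {l l' : List V} :
    BlockAt ρ m (l ++ l') ↔ BlockAt ρ m l ∧ BlockAt ρ (m + l.length) l' := by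
  simp only [blockAt_iff, List.length_append, List.range_add, List.map_append, List.map_map]
  rw [List.append_eq_append_iff_of_size_eq_left (by simp)]
  simp only [Function.comp_def, add_assoc]

end Paths

section Words

variable [Fintype V]

variable (V) in
open Classical in
noncomputable def words : ℕ → Finset (List V)
  | 0 => {[]}
  | n + 1 => (Finset.univ ×ˢ words n).image fun p => p.1 :: p.2

lemma mem_words {n : ℕ} {l : List V} : l ∈ words V n ↔ l.length = n := by
  induction n generalizing l with
  | zero => simp [words]
  | succ n ih => cases l <;> simp [words, ih]

lemma sum_words_succ {M : Type*} [AddCommMonoid M] (n : ℕ) (F : List V → M) :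
    ∑ l ∈ words V (n + 1), F l = ∑ v : V, ∑ l ∈ words V n, F (v :: l) := by
  classical
  rw [words, Finset.sum_image (by simp), Finset.sum_product]

lemma sum_words_add {M : Type*} [AddCommMonoid M] (m n : ℕ) (F : List V → M) :
    ∑ l ∈ words V (m + n), F l = ∑ b ∈ words V m, ∑ c ∈ words V n, F (b ++ c) := by
  induction m generalizing F with
  | zero => simp [words]
  | succ m ih =>
    rw [Nat.add_right_comm, sum_words_succ, sum_words_succ]
    simp only [ih, List.cons_append]

end Words

section Weight

variable [Fintype V] (E : V → V → Prop) (w : V → V → ℝ≥0)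

noncomputable def weight (u : V) : List V → ℝ≥0∞
  | [] => 1
  | v :: l => transP E w u v * weight v l

@[simp] lemma weight_nil (u : V) : weight E w u [] = 1 := rfl

@[simp] lemma weight_cons (u v : V) (l : List V) :
    weight E w u (v :: l) = transP E w u v * weight E w v l := rfl

lemma weight_append (u : V) (l l' : List V) :
    weight E w u (l ++ l') = weight E w u l * weight E w (l.getLastD u) l' := by
  induction l generalizing u with
  | nil => simp
  | cons v l ih =>
    rw [List.cons_append, weight_cons, weight_cons, ih, List.getLastD_cons, mul_assoc]

lemma pathP_cons (u : V) (l : List V) : pathP E w (u :: l) = weight E w u l := by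
  induction l generalizing u with
  | nil => simp [pathP]
  | cons v l ih => simp [← ih, pathP]

open Classical in
lemma transP_of_adj {u v : V} (huv : E u v) :
    transP E w u v
      = (w u v : ℝ≥0∞) / ∑ x ∈ Finset.univ.filter (E u), (w u x : ℝ≥0∞) := by
  simp [transP, huv]

lemma transP_of_not_adj {u v : V} (huv : ¬ E u v) : transP E w u v = 0 := by
  simp [transP, huv]

lemma transP_le_one (u v : V) : transP E w u v ≤ 1 := by
  classical
  by_cases huv : E u v
  · rw [transP_of_adj E w huv]
    refine ENNReal.div_le_of_le_mul ?_
    rw [one_mul]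
    exact Finset.single_le_sum (f := fun x => (w u x : ℝ≥0∞)) (fun _ _ => zero_le)
      (Finset.mem_filter.mpr ⟨Finset.mem_univ v, huv⟩)
  · simp [transP_of_not_adj E w huv]

lemma transP_pos (hw : ∀ u v, E u v → 0 < w u v) {u v : V} (huv : E u v) :
    0 < transP E w u v := by
  rw [transP_of_adj E w huv]
  exact ENNReal.div_pos (by simpa using (hw u v huv).ne')
    (ENNReal.sum_ne_top.mpr fun _ _ => ENNReal.coe_ne_top)

lemma sum_transP (hE : ∀ v, ∃ u, E v u) (hw : ∀ u v, E u v → 0 < w u v) (u : V) :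
    ∑ v, transP E w u v = 1 := by
  classical
  set D := ∑ x ∈ Finset.univ.filter (E u), (w u x : ℝ≥0∞)
  have hD : D ≠ 0 := by
    obtain ⟨v, huv⟩ := hE u
    refine ne_of_gt (lt_of_lt_of_le ?_ (Finset.single_le_sum (fun _ _ => zero_le)
      (Finset.mem_filter.mpr ⟨Finset.mem_univ v, huv⟩)))
    simpa using hw u v huv
  calc ∑ v, transP E w u v
      = ∑ v ∈ Finset.univ.filter (E u), (w u v : ℝ≥0∞) * D⁻¹ := by
        rw [Finset.sum_filter]
        refine Finset.sum_congr rfl fun v _ => ?_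
        by_cases huv : E u v
        · rw [transP_of_adj E w huv, if_pos huv, div_eq_mul_inv]
        · rw [transP_of_not_adj E w huv, if_neg huv]
    _ = 1 := by
        rw [← Finset.sum_mul, ENNReal.mul_inv_cancel hD
          (ENNReal.sum_ne_top.mpr fun _ _ => ENNReal.coe_ne_top)]

lemma weight_le_one (u : V) (l : List V) : weight E w u l ≤ 1 := by
  induction l generalizing u with
  | nil => simp
  | cons v l ih => simpa using mul_le_one' (transP_le_one E w u v) (ih v)

lemma weight_ne_top (u : V) (l : List V) : weight E w u l ≠ ⊤ :=
  ((weight_le_one E w u l).trans_lt ENNReal.one_lt_top).ne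

lemma weight_pos (hw : ∀ u v, E u v → 0 < w u v) {u : V} {l : List V}
    (hl : (u :: l).IsChain E) : 0 < weight E w u l := by
  induction l generalizing u with
  | nil => simp
  | cons v l ih =>
    rw [List.isChain_cons_cons] at hl
    exact ENNReal.mul_pos (transP_pos E w hw hl.1).ne' (ih hl.2).ne'

lemma weight_eq_zero {u : V} {l : List V} (hl : ¬ (u :: l).IsChain E) : weight E w u l = 0 := by
  induction l generalizing u with
  | nil => simp at hl
  | cons v l ih =>
    rw [List.isChain_cons_cons, not_and_or] at hl
    rcases hl with huv | hl
    · rw [weight_cons, transP_of_not_adj E w huv, zero_mul]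
    · rw [weight_cons, ih hl, mul_zero]

lemma sum_weight_words (hE : ∀ v, ∃ u, E v u) (hw : ∀ u v, E u v → 0 < w u v)
    (n : ℕ) (u : V) :
    ∑ l ∈ words V n, weight E w u l = 1 := by
  induction n generalizing u with
  | zero => simp [words]
  | succ n ih =>
    simp only [sum_words_succ, weight_cons, ← Finset.mul_sum, ih, mul_one]
    exact sum_transP E w hE hw u

open Classical in
lemma sum_weight_prefix (hE : ∀ v, ∃ u, E v u) (hw : ∀ u v, E u v → 0 < w u v) (u : V)
    {pat : List V} {n : ℕ} (hn : pat.length ≤ n) :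
    ∑ l ∈ words V n with pat <+: l, weight E w u l = weight E w u pat := by
  obtain ⟨m, rfl⟩ := Nat.exists_eq_add_of_le hn
  rw [Finset.sum_filter, sum_words_add]
  calc ∑ b ∈ words V pat.length, ∑ c ∈ words V m,
          (if pat <+: b ++ c then weight E w u (b ++ c) else 0)
      = ∑ b ∈ words V pat.length,
          if b = pat then ∑ c ∈ words V m, weight E w u (pat ++ c) else 0 := by
        refine Finset.sum_congr rfl fun b hb => ?_
        split_ifs with hbp
        · subst hbp
          simp [List.prefix_append]
        · refine Finset.sum_eq_zero fun c _ => if_neg fun hpre => hbp ?_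
          have hlen : b.length = pat.length := mem_words.mp hb
          exact ((List.prefix_of_prefix_length_le hpre (List.prefix_append b c)
            hlen.ge).eq_of_length hlen.symm).symm
    _ = weight E w u pat := by
        rw [Finset.sum_ite_eq' _ _ _, if_pos (mem_words.mpr rfl)]
        simp only [weight_append, ← Finset.mul_sum, sum_weight_words E w hE hw, mul_one]

open Classical in
lemma sum_weight_not_prefix (hE : ∀ v, ∃ u, E v u) (hw : ∀ u v, E u v → 0 < w u v) (u : V)
    {pat : List V} {n : ℕ} (hn : pat.length ≤ n) :
    ∑ l ∈ words V n with ¬ pat <+: l, weight E w u l = 1 - weight E w u pat := by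
  refine ENNReal.eq_sub_of_add_eq (weight_ne_top E w u pat) ?_
  rw [← sum_weight_prefix E w hE hw u hn, add_comm, Finset.sum_filter_add_sum_filter_not,
    sum_weight_words E w hE hw]

end Weight

section Hitting

variable (t : V → List V) (B : ℕ)

/-- Cut `χ`, read after the vertex `u`, into `k` blocks of length `B`: some block starts with
`t x`, where `x` is the vertex reached just before that block. -/
def Hits : ℕ → V → List V → Prop
  | 0, _, _ => False
  | k + 1, u, χ => t u <+: χ ∨ Hits k ((χ.take B).getLastD u) (χ.drop B)

variable {t B} in
lemma Hits.exists_eq_append {k : ℕ} {u : V} {χ : List V} (h : Hits t B k u χ) :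
    ∃ σ rest, χ = σ ++ t (σ.getLastD u) ++ rest := by
  induction k generalizing u χ with
  | zero => exact h.elim
  | succ k ih =>
    rcases h with ⟨rest, hrest⟩ | h
    · exact ⟨[], rest, by simpa using hrest.symm⟩
    · obtain ⟨σ, rest, hσ⟩ := ih h
      refine ⟨χ.take B ++ σ, rest, ?_⟩
      rw [getLastD_append, List.append_assoc, List.append_assoc, ← List.append_assoc σ,
        ← hσ, List.take_append_drop]

variable {t B} in
lemma Hits.ne_nil (ht : ∀ v, t v ≠ []) {k : ℕ} {u : V} {χ : List V} (h : Hits t B k u χ) :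
    χ ≠ [] := by
  obtain ⟨σ, rest, rfl⟩ := h.exists_eq_append
  simp [ht]

lemma hits_append_iff {k : ℕ} {u : V} {b c : List V} (hb : b.length = B) :
    Hits t B (k + 1) u (b ++ c) ↔ t u <+: b ++ c ∨ Hits t B k (b.getLastD u) c := by
  rw [Hits, List.take_left' hb, List.drop_left' hb]

open Classical in
lemma sum_weight_not_hits_le [Fintype V] (E : V → V → Prop) (w : V → V → ℝ≥0)
    (hE : ∀ v, ∃ u, E v u) (hw : ∀ u v, E u v → 0 < w u v) {δ : ℝ≥0∞}
    (hB : ∀ v, (t v).length ≤ B) (hδ : ∀ v, δ ≤ weight E w v (t v)) (k : ℕ) (u : V) :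
    ∑ χ ∈ words V (k * B) with ¬ Hits t B k u χ, weight E w u χ ≤ (1 - δ) ^ k := by
  induction k generalizing u with
  | zero => simp [words, Hits]
  | succ k ih =>
    have hsplit : ∀ b ∈ words V B, ∀ c,
        (if ¬ Hits t B (k + 1) u (b ++ c) then weight E w u (b ++ c) else 0)
          ≤ (if ¬ t u <+: b then weight E w u b else 0) *
            (if ¬ Hits t B k (b.getLastD u) c then weight E w (b.getLastD u) c else 0) := by
      intro b hb c
      rw [hits_append_iff t B (mem_words.mp hb)]
      by_cases hc : t u <+: b ++ c ∨ Hits t B k (b.getLastD u) c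
      · rw [if_neg (not_not.mpr hc)]
        exact zero_le
      · rw [not_or] at hc
        rw [if_pos (not_or.mpr hc), if_pos fun hb' => hc.1 (hb'.trans (List.prefix_append b c)),
          if_pos hc.2, weight_append]
    calc ∑ χ ∈ words V ((k + 1) * B) with ¬ Hits t B (k + 1) u χ, weight E w u χ
        ≤ ∑ b ∈ words V B, (if ¬ t u <+: b then weight E w u b else 0) *
            ∑ c ∈ words V (k * B) with ¬ Hits t B k (b.getLastD u) c,
              weight E w (b.getLastD u) c := by
          rw [Finset.sum_filter, add_one_mul, add_comm, sum_words_add]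
          refine Finset.sum_le_sum fun b hb => ?_
          rw [Finset.sum_filter, Finset.mul_sum]
          exact Finset.sum_le_sum fun c _ => hsplit b hb c
      _ ≤ ∑ b ∈ words V B, (if ¬ t u <+: b then weight E w u b else 0) * (1 - δ) ^ k :=
          Finset.sum_le_sum fun b _ => mul_le_mul_right (ih _) _
      _ = (1 - weight E w u (t u)) * (1 - δ) ^ k := by
          rw [← Finset.sum_mul, ← Finset.sum_filter, sum_weight_not_prefix E w hE hw u (hB u)]
      _ ≤ (1 - δ) ^ (k + 1) := by
          rw [pow_succ']
          exact mul_le_mul_left (tsub_le_tsub_left (hδ u) 1) _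

end Hitting

section Proposal

variable [Fintype V] (E : V → V → Prop) (w : V → V → ℝ≥0)

open Classical in
noncomputable def proposal (t : V → List V) (B k : ℕ) (u : V) : Finset (List V) :=
  {χ ∈ words V (k * B) | Hits t B k u χ ∧ (u :: χ).IsChain E}

lemma mem_proposal {t : V → List V} {B k : ℕ} {u : V} {χ : List V} :
    χ ∈ proposal E t B k u ↔
      χ.length = k * B ∧ Hits t B k u χ ∧ (u :: χ).IsChain E := by
  simp [proposal, mem_words]

open Classical in
lemma sum_weight_proposal (t : V → List V) (B k : ℕ) (u : V) :
    ∑ χ ∈ proposal E t B k u, weight E w u χ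
      = ∑ χ ∈ words V (k * B) with Hits t B k u χ, weight E w u χ := by
  rw [proposal, ← Finset.filter_filter]
  refine Finset.sum_filter_of_ne fun χ _ hχ => ?_
  by_contra hc
  exact hχ (weight_eq_zero E w hc)

lemma exists_le_sum_weight_proposal (hE : ∀ v, ∃ u, E v u) (hw : ∀ u v, E u v → 0 < w u v)
    {t : V → List V} (ht : ∀ v, (v :: t v).IsChain E) {a : ℝ≥0∞} (ha : a < 1) :
    ∃ B k, ∀ u, a ≤ ∑ χ ∈ proposal E t B k u, weight E w u χ := by
  classical
  set δ := Finset.univ.inf fun v => weight E w v (t v)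
  have hδ : ∀ v, δ ≤ weight E w v (t v) := fun v => Finset.inf_le (Finset.mem_univ v)
  have hδ0 : δ ≠ 0 := (Finset.lt_inf_iff ENNReal.zero_lt_top |>.mpr
    fun v _ => weight_pos E w hw (ht v)).ne'
  obtain ⟨k, hk⟩ : ∃ k, (1 - δ) ^ k < 1 - a :=
    ((ENNReal.tendsto_pow_atTop_nhds_zero_of_lt_one
      (ENNReal.sub_lt_self ENNReal.one_ne_top one_ne_zero hδ0)).eventually_lt_const
      (tsub_pos_of_lt ha)).exists
  set B := Finset.univ.sup fun v => (t v).length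
  refine ⟨B, k, fun u => ?_⟩
  have hmiss := sum_weight_not_hits_le t B E w hE hw
    (fun v => Finset.le_sup (f := fun v => (t v).length) (Finset.mem_univ v)) hδ k u
  have htotal := Finset.sum_filter_add_sum_filter_not (words V (k * B)) (Hits t B k u)
    (weight E w u)
  rw [sum_weight_words E w hE hw] at htotal
  rw [sum_weight_proposal, ENNReal.eq_sub_of_add_eq (ne_top_of_lt (hmiss.trans_lt hk)) htotal]
  calc a = 1 - (1 - a) := (ENNReal.sub_sub_cancel ENNReal.one_ne_top ha.le).symm
    _ ≤ _ := tsub_le_tsub_left (hmiss.trans hk.le) 1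

end Proposal

section Cylinders

lemma cyl_eq_iInter (l : List V) :
    Cyl l = ⋂ i : Fin l.length, (fun ρ : ℕ → V => ρ i) ⁻¹' {l[i]} := by
  ext ρ
  simp [Cyl, pref, List.ext_getElem_iff, Fin.forall_iff, eq_comm]

lemma measurableSet_cyl [MeasurableSpace V] [DiscreteMeasurableSpace V] (l : List V) :
    MeasurableSet (Cyl l) := by
  rw [cyl_eq_iInter]
  exact MeasurableSet.iInter fun i => measurable_pi_apply _ (.of_discrete)

lemma disjoint_cyl {l l' : List V} (hlen : l.length = l'.length) (hne : l ≠ l') :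
    Disjoint (Cyl l) (Cyl l') :=
  Set.disjoint_left.mpr fun _ h h' => hne (h.symm.trans (hlen ▸ h'))

lemma IsPos.exists_eq_cons {E : V → V → Prop} {v₀ : V} {π : List V} (hπ : IsPos E v₀ π) :
    ∃ s, π = v₀ :: s :=
  List.head?_eq_some_iff.mp hπ.1

variable [Fintype V] [MeasurableSpace V] {E : V → V → Prop} {v₀ : V} {w : V → V → ℝ≥0}
  {P : Measure (ℕ → V)}

lemma IsReasonable.measure_cyl_append (hP : IsReasonable E v₀ w P) {π : List V}
    (hπ : π.head? = some v₀) (τ : List V) :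
    P (Cyl (π ++ τ)) = P (Cyl π) * weight E w (π.getLastD v₀) τ := by
  obtain ⟨s, rfl⟩ := List.head?_eq_some_iff.mp hπ
  rw [hP.2 _ hπ, hP.2 _ (by simp), List.cons_append, pathP_cons, pathP_cons, weight_append,
    List.getLastD_cons]

lemma legalProposal_of_le_sum_weight [DiscreteMeasurableSpace V]
    (hw : ∀ u v, E u v → 0 < w u v) (hP : IsReasonable E v₀ w P) {α : ℝ} (hα : 0 < α)
    {π : List V} (hπ : IsPos E v₀ π) {S : Finset (List V)} {n : ℕ}
    (hlen : ∀ τ ∈ S, τ.length = n)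
    (hS : ∀ τ ∈ S, τ ≠ [] ∧ (π.getLastD v₀ :: τ).IsChain E)
    (hsum : ENNReal.ofReal α ≤ ∑ τ ∈ S, weight E w (π.getLastD v₀) τ) :
    LegalProposal E P α π S := by
  obtain ⟨s, rfl⟩ := hπ.exists_eq_cons
  have hPπ : P (Cyl (v₀ :: s)) ≠ 0 := by
    rw [hP.2 _ hπ.1, pathP_cons]
    exact (weight_pos E w hw hπ.2).ne'
  have := hP.1
  rw [List.getLastD_cons] at hS hsum
  refine ⟨?_, fun τ hτ => ⟨(hS τ hτ).1, isChain_cons_append hπ.2 (hS τ hτ).2⟩, ?_⟩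
  · refine Finset.nonempty_iff_ne_empty.mpr fun hS0 => ?_
    rw [hS0, Finset.sum_empty, nonpos_iff_eq_zero, ENNReal.ofReal_eq_zero] at hsum
    exact hsum.not_gt hα
  · have hdisj : (S : Set (List V)).PairwiseDisjoint fun τ => Cyl (v₀ :: s ++ τ) :=
      fun τ hτ τ' hτ' hne => disjoint_cyl (by simp [hlen τ hτ, hlen τ' hτ'])
        (mt List.append_cancel_left hne)
    rw [measure_biUnion_finset hdisj fun τ _ => measurableSet_cyl _]
    simp only [hP.measure_cyl_append hπ.1, ← Finset.mul_sum]
    rwa [mul_comm, ENNReal.mul_div_cancel_right hPπ (measure_ne_top P _), List.getLastD_cons]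

end Cylinders

section MoveCounting

variable {E : V → V → Prop} {h : V → ℕ → List V}

/-- The first `n` moves of `h` from `v`, with player 1 never interjecting. -/
def movesFrom (h : V → ℕ → List V) (v : V) : ℕ → List V
  | 0 => []
  | n + 1 => movesFrom h v n ++ h ((movesFrom h v n).getLastD v) (n + 1)

lemma movesFrom_prefix (h : V → ℕ → List V) (v : V) {m n : ℕ} (hmn : m ≤ n) :
    movesFrom h v m <+: movesFrom h v n := by
  induction n, hmn using Nat.le_induction with
  | base => exact List.prefix_refl _
  | succ n _ ih => exact ih.trans (List.prefix_append _ _)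

lemma isChain_movesFrom (hh : IsCountingStrategy E h) (v : V) (n : ℕ) :
    (v :: movesFrom h v n).IsChain E := by
  induction n with
  | zero => simp [movesFrom]
  | succ n ih => exact isChain_cons_append ih (hh _ (n + 1) (by omega)).2

lemma movesFrom_ne_nil (hh : IsCountingStrategy E h) (v : V) {n : ℕ} (hn : n ≠ 0) :
    movesFrom h v n ≠ [] := by
  obtain ⟨n, rfl⟩ := Nat.exists_eq_succ_of_ne_zero hn
  simp [movesFrom, (hh _ (n + 1) (by omega)).1]

lemma BlockAt.exists_blockAt_move {ρ : ℕ → V} {m i : ℕ} (hi : i < m) {a x : V}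
    {σ rest : List V} (hx : σ.getLastD ((pref ρ m).getLastD a) = x)
    (hb : BlockAt ρ m (σ ++ movesFrom h x m ++ rest)) :
    ∃ d, m ≤ d ∧
      d + (h (ρ (d - 1)) (i + 1)).length ≤ m + (σ ++ movesFrom h x m ++ rest).length ∧
      BlockAt ρ d (h (ρ (d - 1)) (i + 1)) := by
  obtain ⟨Δ, hΔ⟩ := movesFrom_prefix h x (Nat.succ_le_of_lt hi)
  set e := (movesFrom h x i).getLastD x
  have hsplit : σ ++ movesFrom h x m ++ rest
      = σ ++ movesFrom h x i ++ h e (i + 1) ++ (Δ ++ rest) := by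
    rw [← hΔ]
    simp only [movesFrom, e, List.append_assoc]
  rw [hsplit] at hb ⊢
  obtain ⟨⟨⟨hσ, hmoves⟩, hmove⟩, -⟩ := by simpa only [blockAt_append] using hb
  rw [List.length_append, ← add_assoc] at hmove
  set d := m + σ.length + (movesFrom h x i).length
  have hd : d ≠ 0 := by omega
  have hlast : ρ (d - 1) = e := by
    rw [← getLastD_pref ρ hd a, hmoves, hσ, getLastD_append, getLastD_append, hx]
  refine ⟨d, by omega, ?_, hlast ▸ hmove⟩
  simp only [List.length_append, hlast]
  omega

lemma consMoveCounting_of_consAlpha (a : V) {f : List V → Finset (List V)}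
    (hf : ∀ π, ∀ τ ∈ f π,
      ∃ σ rest, τ = σ ++ movesFrom h (σ.getLastD (π.getLastD a)) π.length ++ rest)
    {ρ : ℕ → V} (hρ : ConsAlpha f ρ) : ConsMoveCounting h ρ := by
  obtain ⟨c, hc0, hc⟩ := hρ
  have hlt : ∀ i, c i < c (i + 1) := fun i => by
    obtain ⟨τ, -, -, hτ⟩ := hc i
    omega
  have hlb : ∀ i, i < c i := fun i => by
    induction i with
    | zero => exact hc0
    | succ i ih => have := hlt i; omega
  have key : ∀ i, ∃ d, c i ≤ d ∧ d + (h (ρ (d - 1)) (i + 1)).length < c (i + 1) ∧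
      BlockAt ρ d (h (ρ (d - 1)) (i + 1)) := fun i => by
    obtain ⟨τ, hτ, hτb, hτlt⟩ := hc i
    obtain ⟨σ, rest, rfl⟩ := hf _ τ hτ
    rw [length_pref] at hτb hτlt
    obtain ⟨d, hd, hdlen, hdb⟩ := BlockAt.exists_blockAt_move (hlb i) rfl hτb
    exact ⟨d, hd, hdlen.trans_lt hτlt, hdb⟩
  choose d hcd hdlt hdb using key
  exact ⟨d, hc0.trans (hcd 0), fun i => ⟨hdb i, (hdlt i).trans_le (hcd (i + 1))⟩⟩

end MoveCounting

end BMGame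

theorem stmt11_general {V : Type*} [Fintype V] [MeasurableSpace V] [DiscreteMeasurableSpace V]
    (E : V → V → Prop) (hE : ∀ v, ∃ u, E v u) (v₀ : V)
    (W : Set (ℕ → V))
    (w : V → V → ℝ≥0) (hw : ∀ u v, E u v → 0 < w u v)
    (P : MeasureTheory.Measure (ℕ → V)) (hP : IsReasonable E v₀ w P)
    (hmc : ∃ h : V → ℕ → List V, MoveCountingWinning E v₀ W h) :
    ∀ α : ℝ, 0 < α → α < 1 →
      ∃ f : List V → Finset (List V), AlphaWinning E v₀ P α W f := by
  intro α hα0 hα1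
  obtain ⟨h, hh, hwin⟩ := hmc
  choose B k hBk using fun ℓ => exists_le_sum_weight_proposal E w hE hw
    (isChain_movesFrom hh · ℓ) (ENNReal.ofReal_lt_one.mpr hα1)
  refine ⟨fun π => proposal E (movesFrom h · π.length) (B π.length) (k π.length)
    (π.getLastD v₀), fun π hπ => ?_, fun ρ hρ hcons => hwin ρ hρ ?_⟩
  · have hℓ : π.length ≠ 0 := by
      obtain ⟨s, rfl⟩ := hπ.exists_eq_cons
      simp
    refine legalProposal_of_le_sum_weight hw hP hα0 hπ
      (fun τ hτ => ((mem_proposal E).mp hτ).1) (fun τ hτ => ?_) (hBk _ _)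
    obtain ⟨-, hhits, hchain⟩ := (mem_proposal E).mp hτ
    exact ⟨hhits.ne_nil fun v => movesFrom_ne_nil hh v hℓ, hchain⟩
  · exact consMoveCounting_of_consAlpha v₀
      (fun π τ hτ => ((mem_proposal E).mp hτ).2.1.exists_eq_append) hcons

/-- If Player 0 has a move-counting winning strategy for `(G, v₀, W)`, then for every
`0 < α < 1` Player 0 has a winning α-strategy. -/
theorem stmt11 {V : Type*} [Fintype V] [MeasurableSpace V] [DiscreteMeasurableSpace V]
    (E : V → V → Prop) (hE : ∀ v, ∃ u, E v u) (v₀ : V)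
    (W : Set (ℕ → V)) (hW : W ⊆ {ρ | IsPlay E v₀ ρ})
    (w : V → V → ℝ≥0) (hw : ∀ u v, E u v → 0 < w u v)
    (P : MeasureTheory.Measure (ℕ → V)) (hP : IsReasonable E v₀ w P)
    (hmc : ∃ h : V → ℕ → List V, MoveCountingWinning E v₀ W h) :
    ∀ α : ℝ, 0 < α → α < 1 →
      ∃ f : List V → Finset (List V), AlphaWinning E v₀ P α W f :=
  stmt11_general E hE v₀ W w hw P hP hmc
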